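/- arXiv:2310.08790 — 4 statements merged into one kernel-verified Lean document; each statement's English description precedes it below -/
import Mathlib

section
/- Any maximizer x* of the social welfare SW over the box ∏_n [0, ε_n] satisfies the threshold (water-filling) structure: for every n, x*_n = min(max_i x*_i, ε_n). Equivalently, there exists θ ≥ 0 such that x*_n = ε_n whenever ε_n < θ and x*_n = θ otherwise. -/
open Finset

/-!
Moving mass `t > 0` from a coordinate `m` to a coordinate `n` with `x n < x m`, as
`x n ↦ x n + t / d n` and `x m ↦ x m - t / d m`, leaves the weighted average `x̄`, hence the
`g`-term of the welfare, unchanged, while strict convexity of `f` strictly lowers the cost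
`∑ d_i f(x_i)`. So at a maximizer no coordinate `x n` can lie below both `x m` and its cap `ε n`,
i.e. `x n ≥ min (x m) (ε n)` for all `n, m`; taking `m` to be a maximal coordinate gives the
threshold structure with `θ = max_i x_i`.
-/

theorem StrictConvexOn.mul_add_mul_lt_of_transfer {s : Set ℝ} {f : ℝ → ℝ}
    (hf : StrictConvexOn ℝ s f) {a b p q t : ℝ} (ha : a ∈ s) (hb : b ∈ s)
    (hp : 0 < p) (hq : 0 < q) (ht : 0 < t) (htp : t / p < b - a) (htq : t / q < b - a) :
    p * f (a + t / p) + q * f (b - t / q) < p * f a + q * f b := by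
  have htp' : 0 < t / p := div_pos ht hp
  have hab : a < b := by linarith
  have htq' : 0 < t / q := div_pos ht hq
  have hc : a + t / p ∈ s := hf.1.ordConnected.out ha hb ⟨by linarith, by linarith⟩
  have he : b - t / q ∈ s := hf.1.ordConnected.out ha hb ⟨by linarith, by linarith⟩
  -- both secant slopes are compared with the slope `S` of the chord over `[a, b]`
  set S := (f b - f a) / (b - a)
  have h₁ : (f (a + t / p) - f a) / (t / p) < S := by
    simpa only [add_sub_cancel_left] using hf.secant_strict_mono ha hc hb (by linarith) hab.ne'
      (by linarith)
  have h₂ : S < (f (b - t / q) - f b) / -(t / q) := by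
    have := hf.secant_strict_mono hb ha he hab.ne (by linarith) (by linarith)
    rwa [← neg_div_neg_eq, neg_sub, neg_sub, sub_sub_cancel_left] at this
  rw [div_lt_iff₀ htp'] at h₁
  rw [lt_div_iff_of_neg (neg_lt_zero.mpr htq')] at h₂
  have hp' : p * (S * (t / p)) = S * t := by rw [mul_left_comm, mul_div_cancel₀ t hp.ne']
  have hq' : q * (S * -(t / q)) = -(S * t) := by
    rw [mul_left_comm, mul_neg, mul_div_cancel₀ t hq.ne', mul_neg]
  linarith [mul_lt_mul_of_pos_left h₁ hp, mul_lt_mul_of_pos_left h₂ hq]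

theorem exists_pos_div_lt_and_div_lt {p q c : ℝ} (hp : 0 < p) (hq : 0 < q) (hc : 0 < c) :
    ∃ t > 0, t / p < c ∧ t / q < c := by
  refine ⟨c * min p q / 2, by positivity, ?_, ?_⟩
  · rw [div_lt_iff₀ hp]; nlinarith [min_le_left p q]
  · rw [div_lt_iff₀ hq]; nlinarith [min_le_right p q]

section Update

variable {ι β M : Type*} [Fintype ι] [DecidableEq ι] [AddCommGroup M]

theorem Finset.sum_apply_update (φ : ι → β → M) (x : ι → β) (n : ι) (a : β) :
    ∑ i, φ i (Function.update x n a i) = ∑ i, φ i (x i) + (φ n a - φ n (x n)) := by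
  simp_rw [Function.apply_update φ x n a]
  rw [sum_update_of_mem (mem_univ n), sum_eq_add_sum_sdiff_singleton_of_mem (mem_univ n)]
  abel

theorem Finset.sum_apply_update_update (φ : ι → β → M) (x : ι → β) {n m : ι} (hnm : n ≠ m)
    (a b : β) :
    ∑ i, φ i (Function.update (Function.update x n a) m b i)
      = ∑ i, φ i (x i) + (φ n a - φ n (x n)) + (φ m b - φ m (x m)) := by
  rw [sum_apply_update, sum_apply_update, Function.update_of_ne hnm.symm]

end Update

theorem min_le_of_forall_weighted_cost_le {ι : Type*} [Fintype ι] [DecidableEq ι]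
    {d ε x : ι → ℝ} {f : ℝ → ℝ} (hf : StrictConvexOn ℝ Set.univ f) (hd : ∀ i, 0 < d i)
    (hx : x ∈ Set.univ.pi fun i => Set.Icc 0 (ε i))
    (hmin : ∀ y ∈ Set.univ.pi fun i => Set.Icc 0 (ε i),
      ∑ i, d i * y i = ∑ i, d i * x i → ∑ i, d i * f (x i) ≤ ∑ i, d i * f (y i))
    (n m : ι) : min (x m) (ε n) ≤ x n := by
  by_contra! hlt
  obtain ⟨hnm_lt, hnε⟩ := lt_min_iff.mp hlt
  have hnm : n ≠ m := by rintro rfl; exact hnm_lt.false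
  obtain ⟨t, ht, htn, htm⟩ := exists_pos_div_lt_and_div_lt (hd n) (hd m)
    (lt_min (sub_pos.mpr hnε) (sub_pos.mpr hnm_lt))
  have htn' : 0 < t / d n := div_pos ht (hd n)
  have htm' : 0 < t / d m := div_pos ht (hd m)
  set y := Function.update (Function.update x n (x n + t / d n)) m (x m - t / d m)
  have hbox : ∀ i, 0 ≤ x i ∧ x i ≤ ε i := fun i => hx i (Set.mem_univ i)
  have hy : y ∈ Set.univ.pi fun i => Set.Icc 0 (ε i) := by
    intro i _
    rcases eq_or_ne i m with rfl | him
    · simp only [y, Function.update_self]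
      constructor <;> linarith [hbox n, hbox i, min_le_right (ε n - x n) (x i - x n)]
    rcases eq_or_ne i n with rfl | hin
    · simp only [y, Function.update_of_ne him, Function.update_self]
      constructor <;> linarith [hbox i, min_le_left (ε i - x i) (x m - x i)]
    · simpa only [y, Function.update_of_ne him, Function.update_of_ne hin] using hx i (Set.mem_univ i)
  have hsum : ∑ i, d i * y i = ∑ i, d i * x i := by
    rw [sum_apply_update_update (fun i r => d i * r) x hnm, mul_add, mul_sub,
      mul_div_cancel₀ t (hd n).ne', mul_div_cancel₀ t (hd m).ne']
    ring
  have hcost : ∑ i, d i * f (y i) < ∑ i, d i * f (x i) := by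
    rw [sum_apply_update_update (fun i r => d i * f r) x hnm]
    have := hf.mul_add_mul_lt_of_transfer (Set.mem_univ (x n)) (Set.mem_univ (x m)) (hd n) (hd m)
      ht (htn.trans_le (min_le_right _ _)) (htm.trans_le (min_le_right _ _))
    linarith
  exact (hmin y hy hsum).not_gt hcost

theorem swm_threshold_structure_general (N : ℕ) (hN : 0 < N) (d w ε : Fin N → ℝ)
    (hd : ∀ n, 0 < d n)
    (g f : ℝ → ℝ)
    (hf : StrictConvexOn ℝ Set.univ f)
    (SW : (Fin N → ℝ) → ℝ)
    (hSW : SW = fun x => (∑ n, w n) * g ((∑ i, d i * x i) / ∑ i, d i)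
      - ∑ n, d n * (f (x n) - f (ε n)))
    (x : Fin N → ℝ) (hx : x ∈ Set.univ.pi fun n => Set.Icc 0 (ε n))
    (hmax : ∀ y ∈ Set.univ.pi fun n => Set.Icc 0 (ε n), SW y ≤ SW x) :
    (∀ n, x n = min (Finset.univ.sup' (Finset.univ_nonempty_iff.mpr ⟨⟨0, hN⟩⟩) x) (ε n))
    ∧ ∃ θ ≥ (0 : ℝ), ∀ n, (ε n < θ → x n = ε n) ∧ (θ ≤ ε n → x n = θ) := by
  subst hSW
  have hgap := min_le_of_forall_weighted_cost_le hf hd hx fun y hy hsum => by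
    have := hmax y hy
    simp only [hsum, mul_sub, sum_sub_distrib] at this
    linarith
  obtain ⟨m, -, hm⟩ := exists_mem_eq_sup' (univ_nonempty_iff.mpr ⟨⟨0, hN⟩⟩) x
  have hbox : ∀ n, 0 ≤ x n ∧ x n ≤ ε n := fun n => hx n (Set.mem_univ n)
  have hx_eq : ∀ n, x n = min (x m) (ε n) := fun n =>
    le_antisymm (le_min (hm ▸ le_sup' x (mem_univ n)) (hbox n).2) (hgap n m)
  refine ⟨hm ▸ hx_eq, x m, (hbox m).1, fun n => ⟨fun h => ?_, fun h => ?_⟩⟩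
  · rw [hx_eq n, min_eq_right h.le]
  · rw [hx_eq n, min_eq_left h]

/-- Any maximizer of the social welfare over the box `∏_n [0, ε_n]` has the
threshold (water-filling) structure: `x*_n = min (max_i x*_i) (ε_n)` for every `n`;
equivalently there is a threshold `θ ≥ 0` with `x*_n = ε_n` when `ε_n < θ` and
`x*_n = θ` otherwise. -/
theorem swm_threshold_structure (N : ℕ) (hN : 0 < N) (d w ε : Fin N → ℝ)
    (hd : ∀ n, 0 < d n) (hw : ∀ n, 0 < w n) (hε : ∀ n, 0 ≤ ε n)
    (g f : ℝ → ℝ) (hg : ConcaveOn ℝ Set.univ g) (hg' : Antitone g)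
    (hf : StrictConvexOn ℝ Set.univ f) (hf' : Antitone f)
    (SW : (Fin N → ℝ) → ℝ)
    (hSW : SW = fun x => (∑ n, w n) * g ((∑ i, d i * x i) / ∑ i, d i)
      - ∑ n, d n * (f (x n) - f (ε n)))
    (x : Fin N → ℝ) (hx : x ∈ Set.univ.pi fun n => Set.Icc 0 (ε n))
    (hmax : ∀ y ∈ Set.univ.pi fun n => Set.Icc 0 (ε n), SW y ≤ SW x) :
    (∀ n, x n = min (Finset.univ.sup' (Finset.univ_nonempty_iff.mpr ⟨⟨0, hN⟩⟩) x) (ε n))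
    ∧ ∃ θ ≥ (0 : ℝ), ∀ n, (ε n < θ → x n = ε n) ∧ (θ ≤ ε n → x n = θ) :=
  swm_threshold_structure_general N hN d w ε hd g f hf SW hSW x hx hmax
end

section
/- Suppose x is a point in the box ∏_n [0, ε_n] such that there exist indices n, m with x_n < ε_n and x_n < x_m. Then x is not a maximizer of SW: there exists x' in the box with the same average noise rate x̄(x') = x̄(x) and strictly smaller total denoising cost Σ_n d_n(f(x'_n) - f(ε_n)) < Σ_n d_n(f(x_n) - f(ε_n)), hence SW(x') > SW(x). -/
open Finset

/-- Slope comparison for strictly convex functions on `univ`: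
if `p < q ≤ r < u` then the secant slope on `[p,q]` is strictly less than on `[r,u]`. -/
lemma slope_lt_of_strictConvex (f : ℝ → ℝ) (hf : StrictConvexOn ℝ Set.univ f)
    {p q r u : ℝ} (hpq : p < q) (hqr : q ≤ r) (hru : r < u) :
    (f q - f p) / (q - p) < (f u - f r) / (u - r) := by
  have hpu : p < u := lt_of_lt_of_le hpq (hqr.trans hru.le)
  have hqu : q < u := lt_of_le_of_lt hqr hru
  have h1 : (f q - f p) / (q - p) < (f u - f p) / (u - p) :=
    hf.secant_strict_mono_aux2 (Set.mem_univ p) (Set.mem_univ u) hpq hqu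
  have h2 : (f u - f p) / (u - p) ≤ (f u - f r) / (u - r) := by
    rcases eq_or_lt_of_le (le_trans hpq.le hqr) with h | h
    · rw [h]
    · exact hf.convexOn.secant_mono_aux3 (Set.mem_univ p) (Set.mem_univ u) h hru
  linarith

/-- If a feasible `x` has some `x_n < ε_n` and `x_n < x_m`, then `x` is not a
maximizer of social welfare: there is a feasible `x'` with the same average noise
rate but strictly smaller total denoising cost, hence strictly larger `SW`. -/
theorem swm_improvable (N : ℕ) (d w ε : Fin N → ℝ)
    (hd : ∀ n, 0 < d n) (hε : ∀ n, 0 ≤ ε n)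
    (g f : ℝ → ℝ) (hf : StrictConvexOn ℝ Set.univ f) (hf' : Antitone f)
    (x : Fin N → ℝ) (hx : x ∈ Set.univ.pi fun n => Set.Icc 0 (ε n))
    (n m : Fin N) (hn : x n < ε n) (hnm : x n < x m) :
    ∃ x' ∈ Set.univ.pi fun i => Set.Icc 0 (ε i),
      (∑ i, d i * x' i) / (∑ i, d i) = (∑ i, d i * x i) / (∑ i, d i)
      ∧ (∑ i, d i * (f (x' i) - f (ε i))) < ∑ i, d i * (f (x i) - f (ε i))
      ∧ ((∑ i, w i) * g ((∑ i, d i * x i) / ∑ i, d i)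
            - ∑ i, d i * (f (x i) - f (ε i)))
        < ((∑ i, w i) * g ((∑ i, d i * x' i) / ∑ i, d i)
            - ∑ i, d i * (f (x' i) - f (ε i))) := by
  have hne : n ≠ m := by
    intro h; rw [h] at hnm; exact lt_irrefl _ hnm
  set a := x n with ha
  set b := x m with hb
  have hdn := hd n
  have hdm := hd m
  -- choose the transfer amount δ
  set δ : ℝ := min (d n * (ε n - a)) (d n * d m * (b - a) / (d n + d m)) with hδdef
  have hδpos : 0 < δ := by
    apply lt_min
    · exact mul_pos hdn (by linarith)
    · apply div_pos
      · apply mul_pos (mul_pos hdn hdm); linarith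
      · linarith
  set s : ℝ := δ / d n with hs
  set t : ℝ := δ / d m with ht
  have hspos : 0 < s := div_pos hδpos hdn
  have htpos : 0 < t := div_pos hδpos hdm
  have hsle : a + s ≤ ε n := by
    have : δ ≤ d n * (ε n - a) := min_le_left _ _
    have : s ≤ ε n - a := by
      rw [hs, div_le_iff₀ hdn]; linarith [this]
    linarith
  have hqr : a + s ≤ b - t := by
    have h1 : δ ≤ d n * d m * (b - a) / (d n + d m) := min_le_right _ _
    have h2 : δ * (d n + d m) ≤ d n * d m * (b - a) := by
      rw [← le_div_iff₀ (by linarith : (0:ℝ) < d n + d m)]; exact h1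
    have : s + t ≤ b - a := by
      rw [hs, ht, div_add_div _ _ (ne_of_gt hdn) (ne_of_gt hdm),
        div_le_iff₀ (mul_pos hdn hdm)]
      nlinarith [h2]
    linarith
  -- the improved point
  set x' : Fin N → ℝ := Function.update (Function.update x n (a + s)) m (b - t) with hx'
  have hx'n : x' n = a + s := by
    rw [hx', Function.update_of_ne hne, Function.update_self]
  have hx'm : x' m = b - t := by
    rw [hx', Function.update_self]
  have hx'other : ∀ i, i ≠ n → i ≠ m → x' i = x i := by
    intro i hin him
    rw [hx', Function.update_of_ne him, Function.update_of_ne hin]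
  have hxn0 : 0 ≤ a := (hx n (Set.mem_univ n)).1
  have hxm : b ≤ ε m := (hx m (Set.mem_univ m)).2
  -- feasibility
  have hfeas : x' ∈ Set.univ.pi fun i => Set.Icc 0 (ε i) := by
    intro i _
    rcases eq_or_ne i n with rfl | hin
    · rw [hx'n]; exact ⟨by linarith, hsle⟩
    rcases eq_or_ne i m with rfl | him
    · rw [hx'm]
      constructor
      · linarith
      · linarith
    · rw [hx'other i hin him]; exact hx i (Set.mem_univ i)
  -- sum splitting
  have split : ∀ c : Fin N → ℝ,
      ∑ i, c i = (∑ i ∈ univ \ {n, m}, c i) + (c n + c m) := by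
    intro c
    rw [← Finset.sum_pair hne, Finset.sum_sdiff (Finset.subset_univ _)]
  have hother : ∀ i ∈ univ \ ({n, m} : Finset (Fin N)),
      x' i = x i := by
    intro i hi
    simp only [Finset.mem_sdiff, Finset.mem_insert, Finset.mem_singleton] at hi
    exact hx'other i (fun h => hi.2 (Or.inl h)) (fun h => hi.2 (Or.inr h))
  have hdns : d n * s = δ := by
    rw [hs, mul_div_cancel₀ _ (ne_of_gt hdn)]
  have hdmt : d m * t = δ := by
    rw [ht, mul_div_cancel₀ _ (ne_of_gt hdm)]
  -- equal weighted sums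
  have hsumeq : (∑ i, d i * x' i) = ∑ i, d i * x i := by
    rw [split (fun i => d i * x' i), split (fun i => d i * x i)]
    have : ∑ i ∈ univ \ {n, m}, d i * x' i = ∑ i ∈ univ \ {n, m}, d i * x i :=
      Finset.sum_congr rfl (fun i hi => by rw [hother i hi])
    rw [this, hx'n, hx'm]
    have h1 : d n * (a + s) = d n * a + δ := by rw [mul_add, hdns]
    have h2 : d m * (b - t) = d m * b - δ := by rw [mul_sub, hdmt]
    linarith
  -- the cost strictly decreases
  have hkey : d n * (f (a + s) - f a) < d m * (f b - f (b - t)) := by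
    have hslope := slope_lt_of_strictConvex f hf
      (show a < a + s by linarith) hqr (show b - t < b by linarith)
    have e1 : a + s - a = s := by ring
    have e2 : b - (b - t) = t := by ring
    rw [e1, e2] at hslope
    have hds : δ / s = d n := by
      rw [hs]; field_simp
    have hdt : δ / t = d m := by
      rw [ht]; field_simp
    calc d n * (f (a + s) - f a) = δ / s * (f (a + s) - f a) := by rw [hds]
      _ = δ * ((f (a + s) - f a) / s) := by ring
      _ < δ * ((f b - f (b - t)) / t) := mul_lt_mul_of_pos_left hslope hδpos
      _ = δ / t * (f b - f (b - t)) := by ring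
      _ = d m * (f b - f (b - t)) := by rw [hdt]
  have hcost : (∑ i, d i * (f (x' i) - f (ε i))) < ∑ i, d i * (f (x i) - f (ε i)) := by
    rw [split (fun i => d i * (f (x' i) - f (ε i))),
        split (fun i => d i * (f (x i) - f (ε i)))]
    have heq : ∑ i ∈ univ \ {n, m}, d i * (f (x' i) - f (ε i))
        = ∑ i ∈ univ \ {n, m}, d i * (f (x i) - f (ε i)) :=
      Finset.sum_congr rfl (fun i hi => by rw [hother i hi])
    rw [heq, hx'n, hx'm]
    have : d n * (f (a + s) - f (ε n)) + d m * (f (b - t) - f (ε m))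
        < d n * (f a - f (ε n)) + d m * (f b - f (ε m)) := by nlinarith [hkey]
    linarith
  refine ⟨x', hfeas, by rw [hsumeq], hcost, ?_⟩
  rw [hsumeq]
  linarith
end

section
/- The function H(θ) = SW(x(θ)), where x_n(θ) = min(θ, ε_n), is unimodal on [0, max_n ε_n]: there exists θ* such that H is nondecreasing on [0, θ*] and nonincreasing on [θ*, max_n ε_n]. -/
open Finset Set

/-!
Write `X(θ) = ∑ dᵢ min(θ, εᵢ)`, `D = ∑ dᵢ`, `W = ∑ wₙ` and `φ(θ) = W g'(X(θ)/D) - D f'(θ)`.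
Tangent-line bounds for the concave `g` and the convex `f` give, for `a ≤ b`,
`(X(b) - X(a))/D · φ(b) ≤ H(b) - H(a) ≤ (X(b) - X(a))/D · φ(a)`.
Hence `H(t)` bounds `H` to the left of `t` where `φ(t) ≥ 0`, and to the right of `t` where
`φ(t) ≤ 0`. Let `c` maximise the continuous `H` on `[0, max εₙ]`. For `s ≤ t ≤ c` either
`H(s) ≤ H(t)` directly, or `H(s) ≤ H(c) ≤ H(t)`; symmetrically on `[c, max εₙ]`.
-/

section Tangent

variable {f : ℝ → ℝ} {S : Set ℝ} {x y : ℝ}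

lemma mul_sub_le_sub_of_le_slope {c : ℝ} (hxy : x ≤ y) (h : x < y → c ≤ slope f x y) :
    c * (y - x) ≤ f y - f x := by
  rcases hxy.eq_or_lt with rfl | hlt
  · simp
  · have := h hlt
    rwa [slope_def_field, le_div_iff₀ (sub_pos.2 hlt)] at this

lemma sub_le_mul_sub_of_slope_le {c : ℝ} (hxy : x ≤ y) (h : x < y → slope f x y ≤ c) :
    f y - f x ≤ c * (y - x) := by
  rcases hxy.eq_or_lt with rfl | hlt
  · simp
  · have := h hlt
    rwa [slope_def_field, div_le_iff₀ (sub_pos.2 hlt)] at this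

lemma ConvexOn.deriv_mul_sub_le_sub (hf : ConvexOn ℝ S f) (hx : x ∈ S) (hy : y ∈ S)
    (hxy : x ≤ y) (hfx : DifferentiableAt ℝ f x) : deriv f x * (y - x) ≤ f y - f x :=
  mul_sub_le_sub_of_le_slope hxy fun hlt => hf.deriv_le_slope hx hy hlt hfx

lemma ConvexOn.sub_le_deriv_mul_sub (hf : ConvexOn ℝ S f) (hx : x ∈ S) (hy : y ∈ S)
    (hxy : x ≤ y) (hfy : DifferentiableAt ℝ f y) : f y - f x ≤ deriv f y * (y - x) :=
  sub_le_mul_sub_of_slope_le hxy fun hlt => hf.slope_le_deriv hx hy hlt hfy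

lemma ConcaveOn.sub_le_deriv_mul_sub (hf : ConcaveOn ℝ S f) (hx : x ∈ S) (hy : y ∈ S)
    (hxy : x ≤ y) (hfx : DifferentiableAt ℝ f x) : f y - f x ≤ deriv f x * (y - x) :=
  sub_le_mul_sub_of_slope_le hxy fun hlt => hf.slope_le_deriv hx hy hlt hfx

lemma ConcaveOn.deriv_mul_sub_le_sub (hf : ConcaveOn ℝ S f) (hx : x ∈ S) (hy : y ∈ S)
    (hxy : x ≤ y) (hfy : DifferentiableAt ℝ f y) : deriv f y * (y - x) ≤ f y - f x :=
  mul_sub_le_sub_of_le_slope hxy fun hlt => hf.deriv_le_slope hx hy hlt hfy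

end Tangent

section Clipping

variable {f : ℝ → ℝ} {a b : ℝ}

lemma ConvexOn.deriv_mul_min_sub_min_le (hf : ConvexOn ℝ univ f) (hfd : Differentiable ℝ f)
    (hab : a ≤ b) (c : ℝ) :
    deriv f a * (min b c - min a c) ≤ f (min b c) - f (min a c) := by
  rcases le_or_gt c a with hca | hac
  · simp [min_eq_right hca, min_eq_right (hca.trans hab)]
  · rw [min_eq_left hac.le]
    exact hf.deriv_mul_sub_le_sub trivial trivial (le_min hab hac.le) (hfd a)

lemma ConvexOn.sub_min_le_deriv_mul (hf : ConvexOn ℝ univ f) (hfd : Differentiable ℝ f)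
    (hab : a ≤ b) (c : ℝ) :
    f (min b c) - f (min a c) ≤ deriv f b * (min b c - min a c) := by
  rcases le_or_gt c a with hca | hac
  · simp [min_eq_right hca, min_eq_right (hca.trans hab)]
  · rw [min_eq_left hac.le]
    have ham : a ≤ min b c := le_min hab hac.le
    have hderiv : deriv f (min b c) ≤ deriv f b :=
      monotoneOn_univ.1 (hf.monotoneOn_deriv fun x _ => hfd x) (min_le_left b c)
    calc f (min b c) - f a ≤ deriv f (min b c) * (min b c - a) :=
          hf.sub_le_deriv_mul_sub trivial trivial ham (hfd _)
      _ ≤ deriv f b * (min b c - a) := mul_le_mul_of_nonneg_right hderiv (sub_nonneg.2 ham)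

variable {ι : Type*} [Fintype ι] (d w ε : ι → ℝ) (g f : ℝ → ℝ)

noncomputable def clippedSum (θ : ℝ) : ℝ := ∑ i, d i * min θ (ε i)

noncomputable def clippedCost (θ : ℝ) : ℝ := ∑ n, d n * (f (min θ (ε n)) - f (ε n))

noncomputable def socialWelfare (θ : ℝ) : ℝ :=
  (∑ n, w n) * g (clippedSum d ε θ / ∑ i, d i) - clippedCost d ε f θ

/-- Away from the `ε n`, `socialWelfare` has derivative
`(∑ n with θ < ε n, d n) / (∑ i, d i) * marginalWelfare θ`. -/
noncomputable def marginalWelfare (θ : ℝ) : ℝ :=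
  (∑ n, w n) * deriv g (clippedSum d ε θ / ∑ i, d i) - (∑ i, d i) * deriv f θ

variable {d w ε g f}

lemma clippedSum_mono (hd : ∀ i, 0 ≤ d i) : Monotone (clippedSum d ε) := fun _ _ hab =>
  sum_le_sum fun i _ => mul_le_mul_of_nonneg_left (min_le_min_right _ hab) (hd i)

lemma clippedSum_sub_eq (θ θ' : ℝ) :
    clippedSum d ε θ' - clippedSum d ε θ = ∑ i, d i * (min θ' (ε i) - min θ (ε i)) := by
  simp only [clippedSum, ← sum_sub_distrib, mul_sub]

lemma clippedCost_sub_eq (θ θ' : ℝ) :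
    clippedCost d ε f θ' - clippedCost d ε f θ
      = ∑ i, d i * (f (min θ' (ε i)) - f (min θ (ε i))) := by
  simp only [clippedCost, ← sum_sub_distrib, ← mul_sub, sub_sub_sub_cancel_right]

end Clipping

section Welfare

variable {ι : Type*} [Fintype ι] {d w ε : ι → ℝ} {g f : ℝ → ℝ} {a b : ℝ}

lemma continuous_socialWelfare (hg : Continuous g) (hf : Continuous f) :
    Continuous (socialWelfare d w ε g f) := by
  unfold socialWelfare clippedSum clippedCost
  fun_prop

lemma socialWelfare_sub_le (hd : ∀ i, 0 ≤ d i) (hD : 0 < ∑ i, d i) (hW : 0 ≤ ∑ n, w n)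
    (hg : ConcaveOn ℝ univ g) (hgd : Differentiable ℝ g)
    (hf : ConvexOn ℝ univ f) (hfd : Differentiable ℝ f) (hab : a ≤ b) :
    socialWelfare d w ε g f b - socialWelfare d w ε g f a
      ≤ (clippedSum d ε b - clippedSum d ε a) / (∑ i, d i) * marginalWelfare d w ε g f a := by
  set D := ∑ i, d i
  set W := ∑ n, w n
  set Xa := clippedSum d ε a
  set Xb := clippedSum d ε b
  have hcost : deriv f a * (Xb - Xa) ≤ clippedCost d ε f b - clippedCost d ε f a := by
    rw [clippedSum_sub_eq, clippedCost_sub_eq, mul_sum]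
    refine sum_le_sum fun i _ => ?_
    rw [mul_left_comm]
    exact mul_le_mul_of_nonneg_left (hf.deriv_mul_min_sub_min_le hfd hab _) (hd i)
  have hgain : g (Xb / D) - g (Xa / D) ≤ deriv g (Xa / D) * (Xb / D - Xa / D) :=
    hg.sub_le_deriv_mul_sub trivial trivial
      (div_le_div_of_nonneg_right (clippedSum_mono hd hab) hD.le) (hgd _)
  have hrhs : (Xb - Xa) / D * marginalWelfare d w ε g f a
      = W * (deriv g (Xa / D) * (Xb / D - Xa / D)) - deriv f a * (Xb - Xa) := by
    simp only [marginalWelfare]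
    field_simp
    ring
  rw [hrhs]
  simp only [socialWelfare]
  linarith [mul_le_mul_of_nonneg_left hgain hW]

lemma sub_le_socialWelfare_sub (hd : ∀ i, 0 ≤ d i) (hD : 0 < ∑ i, d i) (hW : 0 ≤ ∑ n, w n)
    (hg : ConcaveOn ℝ univ g) (hgd : Differentiable ℝ g)
    (hf : ConvexOn ℝ univ f) (hfd : Differentiable ℝ f) (hab : a ≤ b) :
    (clippedSum d ε b - clippedSum d ε a) / (∑ i, d i) * marginalWelfare d w ε g f b
      ≤ socialWelfare d w ε g f b - socialWelfare d w ε g f a := by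
  set D := ∑ i, d i
  set W := ∑ n, w n
  set Xa := clippedSum d ε a
  set Xb := clippedSum d ε b
  have hcost : clippedCost d ε f b - clippedCost d ε f a ≤ deriv f b * (Xb - Xa) := by
    rw [clippedSum_sub_eq, clippedCost_sub_eq, mul_sum]
    refine sum_le_sum fun i _ => ?_
    rw [mul_left_comm]
    exact mul_le_mul_of_nonneg_left (hf.sub_min_le_deriv_mul hfd hab _) (hd i)
  have hgain : deriv g (Xb / D) * (Xb / D - Xa / D) ≤ g (Xb / D) - g (Xa / D) :=
    hg.deriv_mul_sub_le_sub trivial trivial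
      (div_le_div_of_nonneg_right (clippedSum_mono hd hab) hD.le) (hgd _)
  have hlhs : (Xb - Xa) / D * marginalWelfare d w ε g f b
      = W * (deriv g (Xb / D) * (Xb / D - Xa / D)) - deriv f b * (Xb - Xa) := by
    simp only [marginalWelfare]
    field_simp
    ring
  rw [hlhs]
  simp only [socialWelfare]
  linarith [mul_le_mul_of_nonneg_left hgain hW]

lemma socialWelfare_le_of_marginalWelfare_nonneg (hd : ∀ i, 0 ≤ d i) (hD : 0 < ∑ i, d i)
    (hW : 0 ≤ ∑ n, w n) (hg : ConcaveOn ℝ univ g) (hgd : Differentiable ℝ g)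
    (hf : ConvexOn ℝ univ f) (hfd : Differentiable ℝ f) (hab : a ≤ b)
    (hφ : 0 ≤ marginalWelfare d w ε g f b) :
    socialWelfare d w ε g f a ≤ socialWelfare d w ε g f b := by
  have hΔ : 0 ≤ (clippedSum d ε b - clippedSum d ε a) / ∑ i, d i :=
    div_nonneg (sub_nonneg.2 (clippedSum_mono hd hab)) hD.le
  have key : _ ≤ socialWelfare d w ε g f b - socialWelfare d w ε g f a :=
    sub_le_socialWelfare_sub hd hD hW hg hgd hf hfd hab
  linarith [mul_nonneg hΔ hφ]

lemma socialWelfare_le_of_marginalWelfare_nonpos (hd : ∀ i, 0 ≤ d i) (hD : 0 < ∑ i, d i)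
    (hW : 0 ≤ ∑ n, w n) (hg : ConcaveOn ℝ univ g) (hgd : Differentiable ℝ g)
    (hf : ConvexOn ℝ univ f) (hfd : Differentiable ℝ f) (hab : a ≤ b)
    (hφ : marginalWelfare d w ε g f a ≤ 0) :
    socialWelfare d w ε g f b ≤ socialWelfare d w ε g f a := by
  have hΔ : 0 ≤ (clippedSum d ε b - clippedSum d ε a) / ∑ i, d i :=
    div_nonneg (sub_nonneg.2 (clippedSum_mono hd hab)) hD.le
  have key : socialWelfare d w ε g f b - socialWelfare d w ε g f a ≤ _ :=
    socialWelfare_sub_le hd hD hW hg hgd hf hfd hab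
  linarith [mul_nonpos_of_nonneg_of_nonpos hΔ hφ]

end Welfare

theorem exists_monotoneOn_antitoneOn_of_isMaxOn_Icc {α β : Type*}
    [ConditionallyCompleteLinearOrder α] [TopologicalSpace α] [OrderTopology α]
    [LinearOrder β] [TopologicalSpace β] [OrderClosedTopology β]
    {H : α → β} {a b : α} (hab : a ≤ b) (hH : ContinuousOn H (Icc a b))
    (h : ∀ t ∈ Icc a b, IsMaxOn H (Icc a t) t ∨ IsMaxOn H (Icc t b) t) :
    ∃ c ∈ Icc a b, MonotoneOn H (Icc a c) ∧ AntitoneOn H (Icc c b) := by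
  obtain ⟨c, hc, hmax⟩ := isCompact_Icc.exists_isMaxOn (nonempty_Icc.2 hab) hH
  refine ⟨c, hc, fun x hx y hy hxy => ?_, fun x hx y hy hxy => ?_⟩
  · have hy' : y ∈ Icc a b := ⟨hy.1, hy.2.trans hc.2⟩
    rcases h y hy' with hleft | hright
    · exact hleft ⟨hx.1, hxy⟩
    · exact (hmax ⟨hx.1, hx.2.trans hc.2⟩).trans (hright ⟨hy.2, hc.2⟩)
  · have hx' : x ∈ Icc a b := ⟨hc.1.trans hx.1, hx.2⟩
    rcases h x hx' with hleft | hright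
    · exact (hmax ⟨hc.1.trans hy.1, hy.2⟩).trans (hleft ⟨hc.1, hx.1⟩)
    · exact hright ⟨hxy, hy.2⟩

theorem H_unimodal_general (N : ℕ) (hN : 0 < N) (d w ε : Fin N → ℝ)
    (hd : ∀ n, 0 < d n) (hw : ∀ n, 0 < w n) (hε : ∀ n, 0 ≤ ε n)
    (g f : ℝ → ℝ) (hgd : Differentiable ℝ g) (hfd : Differentiable ℝ f)
    (hg : ConcaveOn ℝ Set.univ g)
    (hf : StrictConvexOn ℝ Set.univ f)
    (H : ℝ → ℝ)
    (hH : H = fun θ => (∑ n, w n) * g ((∑ i, d i * min θ (ε i)) / ∑ i, d i)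
      - ∑ n, d n * (f (min θ (ε n)) - f (ε n))) :
    ∃ θstar ∈ Set.Icc (0 : ℝ)
        (Finset.univ.sup' (Finset.univ_nonempty_iff.mpr ⟨⟨0, hN⟩⟩) ε),
      MonotoneOn H (Set.Icc 0 θstar) ∧
      AntitoneOn H (Set.Icc θstar
        (Finset.univ.sup' (Finset.univ_nonempty_iff.mpr ⟨⟨0, hN⟩⟩) ε)) := by
  obtain rfl : H = socialWelfare d w ε g f := hH
  have hd₀ : ∀ i, 0 ≤ d i := fun i => (hd i).le
  have hD : 0 < ∑ i, d i := sum_pos (fun i _ => hd i) ⟨⟨0, hN⟩, mem_univ _⟩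
  have hW : 0 ≤ ∑ n, w n := sum_nonneg fun n _ => (hw n).le
  have hM : 0 ≤ univ.sup' (univ_nonempty_iff.mpr ⟨⟨0, hN⟩⟩) ε :=
    (hε ⟨0, hN⟩).trans (le_sup' ε (mem_univ _))
  refine exists_monotoneOn_antitoneOn_of_isMaxOn_Icc hM
    (continuous_socialWelfare hgd.continuous hfd.continuous).continuousOn fun t _ => ?_
  by_cases hφ : 0 ≤ marginalWelfare d w ε g f t
  · exact Or.inl fun s hs => socialWelfare_le_of_marginalWelfare_nonneg hd₀ hD hW hg hgd
      hf.convexOn hfd hs.2 hφ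
  · exact Or.inr fun s hs => socialWelfare_le_of_marginalWelfare_nonpos hd₀ hD hW hg hgd
      hf.convexOn hfd hs.1 (not_le.1 hφ).le

/-- `H(θ) = SW(x(θ))` with `x_n(θ) = min θ (ε n)` is unimodal on `[0, max_n ε_n]`:
there is `θ*` with `H` nondecreasing on `[0, θ*]` and nonincreasing on `[θ*, max_n ε_n]`. -/
theorem H_unimodal (N : ℕ) (hN : 0 < N) (d w ε : Fin N → ℝ)
    (hd : ∀ n, 0 < d n) (hw : ∀ n, 0 < w n) (hε : ∀ n, 0 ≤ ε n)
    (g f : ℝ → ℝ) (hgd : Differentiable ℝ g) (hfd : Differentiable ℝ f)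
    (hg : ConcaveOn ℝ Set.univ g) (hg' : Antitone g)
    (hf : StrictConvexOn ℝ Set.univ f) (hf' : Antitone f)
    (H : ℝ → ℝ)
    (hH : H = fun θ => (∑ n, w n) * g ((∑ i, d i * min θ (ε i)) / ∑ i, d i)
      - ∑ n, d n * (f (min θ (ε n)) - f (ε n))) :
    ∃ θstar ∈ Set.Icc (0 : ℝ)
        (Finset.univ.sup' (Finset.univ_nonempty_iff.mpr ⟨⟨0, hN⟩⟩) ε),
      MonotoneOn H (Set.Icc 0 θstar) ∧
      AntitoneOn H (Set.Icc θstar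
        (Finset.univ.sup' (Finset.univ_nonempty_iff.mpr ⟨⟨0, hN⟩⟩) ε)) :=
  H_unimodal_general N hN d w ε hd hw hε g f hgd hfd hg hf H hH
end

section
/- Monotonicity of the socially optimal noise rate in average revenue: the zero point x° of h(x) = (w̄/d̄) g'(x̄) - f'(x) (where x̄ is evaluated consistently with the threshold structure) is nonincreasing in w̄ and nondecreasing in d̄. -/
/-!
`x ↦ g'(x̄ x)` is antitone and nonpositive (`g'` is antitone by concavity and nonpositive since
`g` decreases, and `x̄` is monotone), while `f'` is strictly increasing by strict convexity. Hence
raising the coefficient `c = w̄/d̄` in `c g'(x̄ x) = f'(x)` lowers the left side at every point,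
and the solution can only move left.
-/

lemma le_of_mul_eq_of_mul_eq {G F : ℝ → ℝ} (hG : Antitone G) (hG₀ : ∀ x, G x ≤ 0)
    (hF : StrictMono F) {c₁ c₂ x₁ x₂ : ℝ} (hc₁ : 0 ≤ c₁) (hc : c₁ ≤ c₂)
    (h₁ : c₁ * G x₁ = F x₁) (h₂ : c₂ * G x₂ = F x₂) : x₂ ≤ x₁ := by
  by_contra! hlt
  have hF_lt : F x₁ < F x₂ := hF hlt
  have : c₂ * G x₂ ≤ c₁ * G x₁ :=
    calc c₂ * G x₂ ≤ c₂ * G x₁ := mul_le_mul_of_nonneg_left (hG hlt.le) (hc₁.trans hc)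
      _ ≤ c₁ * G x₁ := mul_le_mul_of_nonpos_right hc (hG₀ x₁)
  linarith

theorem swm_zero_point_monotone_general (g f : ℝ → ℝ)
    (hgd : Differentiable ℝ g) (hfd : Differentiable ℝ f)
    (hg : ConcaveOn ℝ Set.univ g) (hg' : Antitone g)
    (hf : StrictConvexOn ℝ Set.univ f)
    (ε : ℝ)
    (xbar : ℝ → ℝ) (hxbar : Monotone xbar)
    (h : ℝ → ℝ → ℝ → ℝ)
    (hh : h = fun wbar dbar x => (wbar / dbar) * deriv g (xbar x) - deriv f x) :
    (∀ w₁ w₂ dbar x₁ x₂, 0 < w₁ → w₁ ≤ w₂ → 0 < dbar →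
      x₁ ∈ Set.Ioo 0 ε → x₂ ∈ Set.Ioo 0 ε →
      h w₁ dbar x₁ = 0 → h w₂ dbar x₂ = 0 → x₂ ≤ x₁)
    ∧ (∀ wbar d₁ d₂ x₁ x₂, 0 < wbar → 0 < d₁ → d₁ ≤ d₂ →
      x₁ ∈ Set.Ioo 0 ε → x₂ ∈ Set.Ioo 0 ε →
      h wbar d₁ x₁ = 0 → h wbar d₂ x₂ = 0 → x₁ ≤ x₂) := by
  subst hh
  have hG : Antitone fun x => deriv g (xbar x) :=
    (antitoneOn_univ.mp (hg.antitoneOn_deriv fun x _ => hgd x)).comp_monotone hxbar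
  have hG₀ : ∀ x, deriv g (xbar x) ≤ 0 := fun _ => hg'.deriv_nonpos
  have hF : StrictMono (deriv f) := strictMonoOn_univ.mp (hf.strictMonoOn_deriv fun x _ => hfd x)
  refine ⟨fun w₁ w₂ dbar x₁ x₂ hw₁ hw hd _ _ h₁ h₂ => ?_,
    fun wbar d₁ d₂ x₁ x₂ hw hd₁ hd _ _ h₁ h₂ => ?_⟩
  · exact le_of_mul_eq_of_mul_eq hG hG₀ hF (by positivity) (by gcongr)
      (sub_eq_zero.mp h₁) (sub_eq_zero.mp h₂)
  · exact le_of_mul_eq_of_mul_eq hG hG₀ hF (div_nonneg hw.le (hd₁.le.trans hd)) (by gcongr)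
      (sub_eq_zero.mp h₂) (sub_eq_zero.mp h₁)

/-- Monotonicity of the socially optimal noise rate: the zero point of
`h(x) = (w̄/d̄) g'(x̄(x)) - f'(x)` is nonincreasing in `w̄` and nondecreasing in `d̄`. -/
theorem swm_zero_point_monotone (g f : ℝ → ℝ)
    (hgd : Differentiable ℝ g) (hfd : Differentiable ℝ f)
    (hg : ConcaveOn ℝ Set.univ g) (hg' : Antitone g)
    (hf : StrictConvexOn ℝ Set.univ f) (hf' : Antitone f)
    (ε : ℝ) (hε : 0 < ε)
    (xbar : ℝ → ℝ) (hxbar : Monotone xbar)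
    (h : ℝ → ℝ → ℝ → ℝ)
    (hh : h = fun wbar dbar x => (wbar / dbar) * deriv g (xbar x) - deriv f x) :
    (∀ w₁ w₂ dbar x₁ x₂, 0 < w₁ → w₁ ≤ w₂ → 0 < dbar →
      x₁ ∈ Set.Ioo 0 ε → x₂ ∈ Set.Ioo 0 ε →
      h w₁ dbar x₁ = 0 → h w₂ dbar x₂ = 0 → x₂ ≤ x₁)
    ∧ (∀ wbar d₁ d₂ x₁ x₂, 0 < wbar → 0 < d₁ → d₁ ≤ d₂ →
      x₁ ∈ Set.Ioo 0 ε → x₂ ∈ Set.Ioo 0 ε →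
      h wbar d₁ x₁ = 0 → h wbar d₂ x₂ = 0 → x₁ ≤ x₂) :=
  swm_zero_point_monotone_general g f hgd hfd hg hg' hf ε xbar hxbar h hh
end
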